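/- arXiv:1304.2295 — 2 statements merged into one kernel-verified Lean document; each statement's English description precedes it below -/
import Mathlib

section
/- Let T be a finite NW-deterministic tile set such that ℤ² has no valid Wang tiling by T. Then the semigroup ⟨𝒜_T⟩ generated by the Mealy automaton 𝒜_T is finite; in fact, if n is such that {0,…,n}² has no valid tiling, then |⟨𝒜_T⟩| ≤ 1 + |A| + |A|² + ⋯ + |A|^{2n−1} + |Σ^n|^{|Σ^n|}. -/
/-- A Mealy automaton with state set `A` and alphabet `X`:
a transition map `δ : A × X → A` and an output map `σ : A × X → X`. -/
structure Mealy (A X : Type*) where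
  δ : A → X → A
  σ : A → X → X

namespace Mealy

variable {A X : Type*} (M : Mealy A X)

/-- The state reached from state `a` after reading the finite word `u`. -/
def stA : A → List X → A
  | a, [] => a
  | a, x :: u => stA (M.δ a x) u

/-- The output word produced by the single state `a` on the finite input word `u`. -/
def outA : A → List X → List X
  | _, [] => []
  | a, x :: u => M.σ a x :: outA (M.δ a x) u

/-- The extended output map: the action `σ_as` of a state word `as` on a finite word. -/
def outW (as : List A) (u : List X) : List X :=
  as.foldl (fun w b => M.outA b w) u

/-- The extended transition map: `δ_u` applied to a state word. -/
def stW : List A → List X → List A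
  | [], _ => []
  | a :: as, u => M.stA a u :: stW as (M.outA a u)

/-- The action of a single state `a` on an infinite word. -/
def outInf (a : A) (w : ℕ → X) : ℕ → X :=
  fun n => M.σ (M.stA a (List.ofFn fun i : Fin n => w i)) (w n)

/-- The action `σ_as` of a state word on an infinite word. -/
def outWInf (as : List A) (w : ℕ → X) : ℕ → X :=
  as.foldl (fun v b => M.outInf b v) w

/-- The semigroup generated by the Mealy automaton, as the set of all
transformations of infinite words given by nonempty state words. -/
def genSet : Set ((ℕ → X) → (ℕ → X)) :=
  {f | ∃ as : List A, as ≠ [] ∧ f = M.outWInf as}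

end Mealy

/-- Concatenation of a finite word with an infinite word. -/
def listApp {X : Type*} (p : List X) (q : ℕ → X) : ℕ → X :=
  fun n => if h : n < p.length then p.get ⟨n, h⟩ else q (n - p.length)

/-- A tile set is NW-deterministic if each tile is determined by its
north and west colors. -/
def NWDet {T C : Type*} (N _S _E W : T → C) : Prop :=
  ∀ s t : T, N s = N t → W s = W t → s = t

open Classical in
/-- The Mealy automaton `𝒜_T` of a tile set: states and letters are tiles
together with a fresh symbol `⊥` (here `none`); the transition is the reset
`δ(x,y) = y`; the output `σ(s,t)` is the unique tile `r` with `r_N = t_S`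
and `r_W = s_E` if it exists, and `⊥` otherwise. -/
noncomputable def tileM {T C : Type*} (N S E W : T → C) :
    Mealy (Option T) (Option T) where
  δ := fun _ y => y
  σ := fun a x =>
    match a, x with
    | some s, some t =>
        if h : ∃ r : T, N r = S t ∧ W r = E s then some h.choose else none
    | _, _ => none

/-- A valid Wang tiling of the plane `ℤ²`. -/
def ValidZ2 {T C : Type*} (N S E W : T → C) (t : ℤ × ℤ → T) : Prop :=
  ∀ x y : ℤ, N (t (x, y)) = S (t (x, y + 1)) ∧ E (t (x, y)) = W (t (x + 1, y))

/-- A valid Wang tiling of the square `{0, 1, …, n}²`. -/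
def ValidSquare {T C : Type*} (N S E W : T → C) (n : ℕ) (t : ℕ → ℕ → T) : Prop :=
  (∀ x y : ℕ, x ≤ n → y < n → N (t x y) = S (t x (y + 1))) ∧
  (∀ x y : ℕ, x < n → y ≤ n → E (t x y) = W (t (x + 1) y))

/-!
Because `δ(x, y) = y`, the letter at position `p + 1` of `σ_a w` is `σ(w p, w (p + 1))`:
in the space-time diagram of `w` under a state word (row `k` is the image of `w` under the
first `k` states), a defined cell of row `k + 1` is a tile lying south of the cell above it
and east of that cell's western neighbour. So if a state word of length at least `2n`
produced a letter other than `⊥` at a position `p ≥ n`, the backward light cone of that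
cell would contain a valid tiling of `{0, …, n}²`. Such words therefore act as maps that
read only the first `n` letters and write `⊥` afterwards, of which there are at most
`|Σ^n|^{|Σ^n|}`; the shorter words give at most `∑_{k < 2n} |A|^k` further elements.
-/

theorem Set.ncard_range_le {α β : Type*} [Finite α] (f : α → β) :
    (Set.range f).ncard ≤ Nat.card α := by
  rw [← Set.image_univ, ← Set.ncard_univ]
  exact Set.ncard_image_le Set.finite_univ

theorem List.ncard_setOf_length_lt_le (α : Type*) [Fintype α] (m : ℕ) :
    {l : List α | l.length < m}.ncard ≤ ∑ k ∈ Finset.range m, Fintype.card α ^ k := by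
  have hrange : {l : List α | l.length < m} =
      Set.range fun x : (Σ k : Fin m, Fin k → α) => List.ofFn x.2 := by
    ext l
    refine ⟨fun hl => ⟨⟨⟨l.length, hl⟩, l.get⟩, List.ofFn_get l⟩, ?_⟩
    rintro ⟨⟨k, f⟩, rfl⟩
    simp
  calc {l : List α | l.length < m}.ncard
      ≤ Nat.card (Σ k : Fin m, Fin k → α) := hrange ▸ Set.ncard_range_le _
    _ = ∑ k ∈ Finset.range m, Fintype.card α ^ k := by
      simp [Nat.card_eq_fintype_card, Fintype.card_sigma, Fin.sum_univ_eq_sum_range]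

namespace Mealy

variable {A X : Type*} (M : Mealy A X)

theorem stA_append (a : A) (u v : List X) : M.stA a (u ++ v) = M.stA (M.stA a u) v := by
  induction u generalizing a with
  | nil => rfl
  | cons x u ih => exact ih (M.δ a x)

theorem outWInf_append_singleton (as : List A) (a : A) (w : ℕ → X) :
    M.outWInf (as ++ [a]) w = M.outInf a (M.outWInf as w) := by
  simp [outWInf]

theorem outInf_zero (a : A) (w : ℕ → X) : M.outInf a w 0 = M.σ a (w 0) := rfl

theorem outInf_congr (a : A) {w w' : ℕ → X} {p : ℕ} (h : ∀ i ≤ p, w i = w' i) :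
    M.outInf a w p = M.outInf a w' p := by
  have hprefix : (fun i : Fin p => w i) = fun i : Fin p => w' i :=
    funext fun i => h i i.isLt.le
  simp only [outInf, hprefix, h p le_rfl]

theorem outWInf_congr (as : List A) {w w' : ℕ → X} {p : ℕ} (h : ∀ i ≤ p, w i = w' i) :
    M.outWInf as w p = M.outWInf as w' p := by
  induction as generalizing w w' with
  | nil => exact h p le_rfl
  | cons a as ih => exact ih fun i hi => M.outInf_congr a fun j hj => h j (hj.trans hi)

def extendBy (n : ℕ) (d : X) (F : (Fin n → X) → Fin n → X) : (ℕ → X) → ℕ → X :=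
  fun w p => if hp : p < n then F (fun i => w i) ⟨p, hp⟩ else d

theorem outWInf_mem_range_extendBy {as : List A} {n : ℕ} {d : X}
    (h : ∀ w, ∀ p ≥ n, M.outWInf as w p = d) : M.outWInf as ∈ Set.range (extendBy n d) := by
  refine ⟨fun v i => M.outWInf as (fun q => if hq : q < n then v ⟨q, hq⟩ else d) i, ?_⟩
  funext w p
  by_cases hp : p < n
  · simp only [extendBy, dif_pos hp]
    exact M.outWInf_congr as fun i hi => dif_pos (hi.trans_lt hp)
  · simp only [extendBy, dif_neg hp]
    exact (h w p (not_lt.mp hp)).symm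

def spaceTime (as : List A) (w : ℕ → X) (k : ℕ) : ℕ → X :=
  M.outWInf (as.take k) w

theorem spaceTime_length (as : List A) (w : ℕ → X) :
    M.spaceTime as w as.length = M.outWInf as w := by
  simp [spaceTime]

theorem spaceTime_succ {as : List A} (w : ℕ → X) {k : ℕ} (hk : k < as.length) :
    M.spaceTime as w (k + 1) = M.outInf as[k] (M.spaceTime as w k) := by
  rw [spaceTime, List.take_add_one, List.getElem?_eq_getElem hk, Option.toList_some,
    outWInf_append_singleton, spaceTime]

end Mealy

section TileAutomaton

variable {T C : Type*} (N S E W : T → C)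

theorem tileM_outInf_succ (a : Option T) (w : ℕ → Option T) (p : ℕ) :
    (tileM N S E W).outInf a w (p + 1) = (tileM N S E W).σ (w p) (w (p + 1)) := by
  simp only [Mealy.outInf, List.ofFn_succ', List.concat_eq_append, Mealy.stA_append]
  rfl

theorem exists_of_tileM_σ_eq_some {s t : Option T} {u : T}
    (h : (tileM N S E W).σ s t = some u) :
    ∃ s' t', s = some s' ∧ t = some t' ∧ N u = S t' ∧ W u = E s' := by
  match s, t with
  | none, _ => exact absurd h (by simp [tileM])
  | some _, none => exact absurd h (by simp [tileM])
  | some s', some t' =>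
    simp only [tileM] at h
    split at h
    · next hex =>
      obtain rfl : hex.choose = u := Option.some_injective _ h
      exact ⟨s', t', rfl, rfl, hex.choose_spec⟩
    · exact absurd h (Option.some_ne_none u).symm

variable {as : List (Option T)} {w : ℕ → Option T}

theorem tileM_spaceTime_south {k q : ℕ} {u : T} (hk : k < as.length)
    (hu : (tileM N S E W).spaceTime as w (k + 1) q = some u) :
    ∃ v, (tileM N S E W).spaceTime as w k q = some v ∧ N u = S v := by
  rw [Mealy.spaceTime_succ _ _ hk] at hu
  obtain ⟨s, hs⟩ : ∃ s, (tileM N S E W).σ s ((tileM N S E W).spaceTime as w k q) = some u := by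
    cases q with
    | zero => exact ⟨as[k], by rwa [Mealy.outInf_zero] at hu⟩
    | succ q => exact ⟨_, by rwa [tileM_outInf_succ] at hu⟩
  obtain ⟨_, v, -, hv, hNS, -⟩ := exists_of_tileM_σ_eq_some N S E W hs
  exact ⟨v, hv, hNS⟩

theorem tileM_spaceTime_west {k q : ℕ} {u : T} (hk : k < as.length)
    (hu : (tileM N S E W).spaceTime as w (k + 1) (q + 1) = some u) :
    ∃ v, (tileM N S E W).spaceTime as w k q = some v ∧ W u = E v := by
  rw [Mealy.spaceTime_succ _ _ hk, tileM_outInf_succ] at hu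
  obtain ⟨v, _, hv, -, -, hWE⟩ := exists_of_tileM_σ_eq_some N S E W hu
  exact ⟨v, hv, hWE⟩

/-- A defined cell of the space-time diagram forces every cell of its backward light cone
to be defined. -/
theorem tileM_spaceTime_ne_none_of_le (j : ℕ) :
    ∀ {κ q μ : ℕ}, κ + j ≤ as.length → μ ≤ q → q ≤ μ + j →
      (tileM N S E W).spaceTime as w (κ + j) q ≠ none →
      (tileM N S E W).spaceTime as w κ μ ≠ none := by
  induction j with
  | zero =>
    intro κ q μ _ hμq hqμ hdef
    rwa [le_antisymm hμq hqμ]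
  | succ j ih =>
    intro κ q μ hlen hμq hqμ hdef
    have hk : κ + j < as.length := by omega
    obtain ⟨u, hu⟩ := Option.ne_none_iff_exists'.mp hdef
    rcases q with _ | q
    · obtain ⟨v, hv, -⟩ := tileM_spaceTime_south N S E W hk hu
      exact ih hk.le hμq (by omega) (by simp [hv])
    · by_cases hq : q + 1 ≤ μ + j
      · obtain ⟨v, hv, -⟩ := tileM_spaceTime_south N S E W hk hu
        exact ih hk.le hμq hq (by simp [hv])
      · obtain ⟨v, hv, -⟩ := tileM_spaceTime_west N S E W hk hu
        exact ih (q := q) hk.le (by omega) (by omega) (by simp [hv])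

theorem tileM_outWInf_eq_none {n : ℕ} (h : ¬∃ t : ℕ → ℕ → T, ValidSquare N S E W n t)
    (hlen : 2 * n ≤ as.length) (w : ℕ → Option T) {p : ℕ} (hp : n ≤ p) :
    (tileM N S E W).outWInf as w p = none := by
  by_contra hne
  set L := as.length
  have hcone : ∀ κ μ, κ ≤ L → μ ≤ p → p ≤ μ + (L - κ) →
      (tileM N S E W).spaceTime as w κ μ ≠ none := fun κ μ hκ hμ hp' =>
    tileM_spaceTime_ne_none_of_le N S E W (L - κ) (by omega) hμ hp'
      (by rwa [Nat.add_sub_cancel' hκ, Mealy.spaceTime_length])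
  obtain ⟨u₀, -⟩ := Option.ne_none_iff_exists'.mp hne
  -- The square is read off the light cone of the cell `(L, p)`: tile `(x, y)` sits in
  -- row `L - n + x - y` and column `p - n + x`.
  refine h ⟨fun x y => ((tileM N S E W).spaceTime as w (L - n + x - y) (p - n + x)).getD u₀,
    ?_, ?_⟩
  · intro x y hx hy
    have hrow : L - n + x - y = (L - n + x - (y + 1)) + 1 := by omega
    obtain ⟨u, hu⟩ := Option.ne_none_iff_exists'.mp
      (hcone (L - n + x - y) (p - n + x) (by omega) (by omega) (by omega))
    rw [hrow] at hu
    obtain ⟨v, hv, hNS⟩ := tileM_spaceTime_south N S E W (by omega) hu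
    simp only [hrow, hu, hv, Option.getD_some, hNS]
  · intro x y hx hy
    have hrow : L - n + (x + 1) - y = (L - n + x - y) + 1 := by omega
    have hcol : p - n + (x + 1) = (p - n + x) + 1 := by omega
    obtain ⟨u, hu⟩ := Option.ne_none_iff_exists'.mp
      (hcone (L - n + (x + 1) - y) (p - n + (x + 1)) (by omega) (by omega) (by omega))
    rw [hrow, hcol] at hu
    obtain ⟨v, hv, hWE⟩ := tileM_spaceTime_west N S E W (by omega) hu
    simp only [hrow, hcol, hu, hv, Option.getD_some, hWE]

end TileAutomaton

theorem genSet_tileM_subset {T C : Type*} (N S E W : T → C) {n : ℕ}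
    (h : ¬∃ t : ℕ → ℕ → T, ValidSquare N S E W n t) :
    (tileM N S E W).genSet ⊆
      (tileM N S E W).outWInf '' {as | as.length < 2 * n} ∪
        Set.range (Mealy.extendBy n none) := by
  rintro f ⟨as, -, rfl⟩
  by_cases hlen : as.length < 2 * n
  · exact Or.inl ⟨as, hlen, rfl⟩
  · exact Or.inr <| Mealy.outWInf_mem_range_extendBy _ fun w _ hp =>
      tileM_outWInf_eq_none N S E W h (not_lt.mp hlen) w hp

theorem stmt_11_general {T C : Type*} [Fintype T] (N S E W : T → C)
    (n : ℕ)
    (h : ¬∃ t : ℕ → ℕ → T, ValidSquare N S E W n t) :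
    (tileM N S E W).genSet.Finite ∧
    (tileM N S E W).genSet.ncard ≤
      (∑ k ∈ Finset.range (2 * n), Fintype.card (Option T) ^ k) +
        (Fintype.card (Option T) ^ n) ^ (Fintype.card (Option T) ^ n) := by
  have hshort := (List.finite_length_lt (Option T) (2 * n)).image (tileM N S E W).outWInf
  have hlong := Set.finite_range (Mealy.extendBy (X := Option T) n none)
  have hsub := genSet_tileM_subset N S E W h
  refine ⟨(hshort.union hlong).subset hsub, ?_⟩
  calc (tileM N S E W).genSet.ncard
      ≤ ((tileM N S E W).outWInf '' {as | as.length < 2 * n}).ncard +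
          (Set.range (Mealy.extendBy (X := Option T) n none)).ncard :=
        (Set.ncard_le_ncard hsub (hshort.union hlong)).trans (Set.ncard_union_le _ _)
    _ ≤ _ := by
      gcongr
      · exact (Set.ncard_image_le (List.finite_length_lt _ _)).trans
          (List.ncard_setOf_length_lt_le _ _)
      · exact (Set.ncard_range_le _).trans_eq <| by
          rw [Nat.card_fun, Nat.card_fun, Nat.card_fin, Nat.card_eq_fintype_card]

/-- if `{0, …, n}²` has no valid Wang tiling by the
NW-deterministic tile set `T` (which holds for some `n` whenever `ℤ²` has no
valid tiling), then the semigroup `⟨𝒜_T⟩` is finite, of cardinality at most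
`1 + |A| + |A|² + ⋯ + |A|^{2n−1} + |Σ^n|^{|Σ^n|}`. -/
theorem stmt_11 {T C : Type*} [Fintype T] (N S E W : T → C)
    (hNW : NWDet N S E W) (n : ℕ)
    (h : ¬∃ t : ℕ → ℕ → T, ValidSquare N S E W n t) :
    (tileM N S E W).genSet.Finite ∧
    (tileM N S E W).genSet.ncard ≤
      (∑ k ∈ Finset.range (2 * n), Fintype.card (Option T) ^ k) +
        (Fintype.card (Option T) ^ n) ^ (Fintype.card (Option T) ^ n) :=
  stmt_11_general N S E W n h
end

section
/- Let T be a finite NW-deterministic tile set with extended Mealy automaton 𝒜'_T (with sink state c outputting ⊥ constantly). Then there exists a positive integer n with σ_⊥^n = σ_c (as maps on Σ^ω) if and only if ℤ² has no valid Wang tiling by T. -/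
/-- The extended Mealy automaton `𝒜'_T`: the automaton `𝒜_T` together with an
additional sink state `c` (here `Sum.inr ()`) with `σ(c,x) = ⊥` and
`δ(c,x) = c` for all letters `x`. -/
noncomputable def tileM' {T C : Type*} (N S E W : T → C) :
    Mealy (Option T ⊕ Unit) (Option T) where
  δ := fun a y =>
    match a with
    | Sum.inl _ => Sum.inl y
    | Sum.inr _ => Sum.inr ()
  σ := fun a x =>
    match a with
    | Sum.inl s => (tileM N S E W).σ s x
    | Sum.inr _ => none

section TileOutput

variable {T C : Type*} (N S E W : T → C)

lemma tileM_σ_none_left (x : Option T) : (tileM N S E W).σ none x = none := by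
  cases x <;> rfl

lemma tileM_σ_none_right (a : Option T) : (tileM N S E W).σ a none = none := by
  cases a <;> rfl

lemma tileM_σ_eq_some {a x : Option T} {r : T} (h : (tileM N S E W).σ a x = some r) :
    ∃ s t, a = some s ∧ x = some t ∧ N r = S t ∧ W r = E s := by
  match a, x with
  | none, x => simp [tileM_σ_none_left] at h
  | some s, none => simp [tileM_σ_none_right] at h
  | some s, some t =>
    classical
    by_cases hex : ∃ r : T, N r = S t ∧ W r = E s
    · have hr : hex.choose = r := by simpa [tileM, hex] using h
      exact ⟨s, t, rfl, rfl, hr ▸ hex.choose_spec⟩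
    · simp [tileM, hex] at h

lemma tileM_σ_some_some (hNW : NWDet N S E W) {s t r : T} (hN : N r = S t) (hW : W r = E s) :
    (tileM N S E W).σ (some s) (some t) = some r := by
  have hex : ∃ r : T, N r = S t ∧ W r = E s := ⟨r, hN, hW⟩
  have hr : hex.choose = r :=
    hNW _ _ (hex.choose_spec.1.trans hN.symm) (hex.choose_spec.2.trans hW.symm)
  simp [tileM, hex, hr]

end TileOutput

section BotAction

variable {T C : Type*} (N S E W : T → C)

local notation "σ⊥" => Mealy.outInf (tileM' N S E W) (Sum.inl none)

lemma tileM'_stA_inr (u : List (Option T)) :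
    (tileM' N S E W).stA (Sum.inr ()) u = Sum.inr () := by
  induction u with
  | nil => rfl
  | cons _ _ ih => exact ih

lemma tileM'_stA_inl_append_singleton (a x : Option T) (u : List (Option T)) :
    (tileM' N S E W).stA (Sum.inl a) (u ++ [x]) = Sum.inl x := by
  induction u generalizing a with
  | nil => rfl
  | cons y u ih => exact ih y

lemma tileM'_outInf_inr (w : ℕ → Option T) :
    (tileM' N S E W).outInf (Sum.inr ()) w = fun _ => none := by
  funext n
  simp only [Mealy.outInf, tileM'_stA_inr]
  rfl

lemma outInf_bot_zero (w : ℕ → Option T) : σ⊥ w 0 = none :=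
  tileM_σ_none_left N S E W (w 0)

lemma outInf_bot_succ (w : ℕ → Option T) (p : ℕ) :
    σ⊥ w (p + 1) = (tileM N S E W).σ (w p) (w (p + 1)) := by
  simp only [Mealy.outInf, List.ofFn_succ', List.concat_eq_append,
    tileM'_stA_inl_append_singleton]
  rfl

lemma iterate_outInf_bot_succ_eq_some {w : ℕ → Option T} {j p : ℕ} {r : T}
    (h : σ⊥^[j + 1] w (p + 1) = some r) :
    ∃ s t, σ⊥^[j] w p = some s ∧ σ⊥^[j] w (p + 1) = some t ∧ N r = S t ∧ W r = E s := by
  rw [Function.iterate_succ_apply', outInf_bot_succ] at h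
  exact tileM_σ_eq_some N S E W h

lemma iterate_outInf_bot_succ_ne_none {w : ℕ → Option T} {j p : ℕ}
    (h : σ⊥^[j + 1] w (p + 1) ≠ none) :
    σ⊥^[j] w p ≠ none ∧ σ⊥^[j] w (p + 1) ≠ none := by
  obtain ⟨r, hr⟩ := Option.ne_none_iff_exists'.mp h
  obtain ⟨s, t, hs, ht, -⟩ := iterate_outInf_bot_succ_eq_some N S E W hr
  simp [hs, ht]

lemma le_of_iterate_outInf_bot_ne_none {w : ℕ → Option T} :
    ∀ {j p : ℕ}, σ⊥^[j] w p ≠ none → j ≤ p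
  | 0, _, _ => Nat.zero_le _
  | j + 1, 0, h => by simp [Function.iterate_succ_apply', outInf_bot_zero] at h
  | j + 1, p + 1, h =>
    Nat.succ_le_succ <|
      le_of_iterate_outInf_bot_ne_none (iterate_outInf_bot_succ_ne_none N S E W h).1

lemma iterate_outInf_bot_ne_none_of_cone {w : ℕ → Option T} {l : ℕ} :
    ∀ {i q : ℕ}, σ⊥^[l + i] w (q + i) ≠ none → ∀ d ≤ i, σ⊥^[l] w (q + d) ≠ none
  | 0, q, h, d, hd => by rwa [Nat.le_zero.mp hd]
  | i + 1, q, h, d, hd => by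
    obtain ⟨hleft, hright⟩ :=
      iterate_outInf_bot_succ_ne_none N S E W (j := l + i) (p := q + i) h
    rcases d with _ | d
    · exact iterate_outInf_bot_ne_none_of_cone hleft 0 (Nat.zero_le _)
    · rw [Nat.add_right_comm] at hright
      simpa only [Nat.add_assoc, Nat.add_comm 1 d] using
        iterate_outInf_bot_ne_none_of_cone hright d (by omega)

/-- The tile at `(x, y)` is the letter at level `k + x - y` and position `b + k + x`, where
`b + 2 * k` is the position of the given letter. -/
lemma exists_validSquare_of_iterate_outInf_bot_eq_some {w : ℕ → Option T} {k p : ℕ} {r : T}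
    (h : σ⊥^[2 * k] w p = some r) : ∃ t, ValidSquare N S E W k t := by
  have hne : σ⊥^[2 * k] w p ≠ none := by simp [h]
  obtain ⟨b, rfl⟩ : ∃ b, p = b + 2 * k :=
    ⟨p - 2 * k, by have := le_of_iterate_outInf_bot_ne_none N S E W hne; omega⟩
  have hdef : ∀ x y, ∃ r : T, x ≤ k → y ≤ k → σ⊥^[k + x - y] w (b + k + x) = some r := by
    intro x y
    by_cases hxy : x ≤ k ∧ y ≤ k
    · have hcone := iterate_outInf_bot_ne_none_of_cone N S E W (l := k + x - y) (i := k + y - x)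
        (q := b + k + x - y) (by convert hne using 2 <;> omega) y (by omega)
      obtain ⟨r', hr'⟩ := Option.ne_none_iff_exists'.mp hcone
      exact ⟨r', fun _ _ => by convert hr' using 2; omega⟩
    · exact ⟨r, fun hx hy => absurd ⟨hx, hy⟩ hxy⟩
  choose t ht using hdef
  refine ⟨t, fun x y hx hy => ?_, fun x y hx hy => ?_⟩
  · have hr := ht x y hx hy.le
    rw [show k + x - y = k + x - (y + 1) + 1 by omega,
      show b + k + x = b + k + x - 1 + 1 by omega] at hr
    obtain ⟨s, u, -, hu, hN, -⟩ := iterate_outInf_bot_succ_eq_some N S E W hr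
    rw [Nat.sub_add_cancel (by omega), ht x (y + 1) hx hy] at hu
    rw [hN, Option.some.inj hu]
  · have hr := ht (x + 1) y hx hy
    rw [show k + (x + 1) - y = k + x - y + 1 by omega, ← Nat.add_assoc] at hr
    obtain ⟨s, u, hs, -, -, hW⟩ := iterate_outInf_bot_succ_eq_some N S E W hr
    rw [ht x y hx.le hy] at hs
    rw [hW, Option.some.inj hs]

lemma iterate_outInf_bot_diagonal (hNW : NWDet N S E W) {f : ℤ × ℤ → T}
    (hf : ValidZ2 N S E W f) :
    ∀ m p : ℕ, σ⊥^[m] (fun j => some (f (j, j))) (p + m) = some (f (↑(p + m), p))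
  | 0, p => by simp
  | m + 1, p => by
    rw [← Nat.add_assoc, Function.iterate_succ_apply', outInf_bot_succ,
      iterate_outInf_bot_diagonal hNW hf m p, Nat.add_right_comm,
      iterate_outInf_bot_diagonal hNW hf m (p + 1)]
    apply tileM_σ_some_some N S E W hNW
    · simpa [Nat.add_right_comm] using (hf (↑(p + m + 1)) p).1
    · convert ((hf (↑(p + m)) p).2).symm using 4
      push_cast
      ring

end BotAction

lemma ValidSquare.mono {T C : Type*} {N S E W : T → C} {k m : ℕ} {t : ℕ → ℕ → T}
    (h : ValidSquare N S E W m t) (hkm : k ≤ m) : ValidSquare N S E W k t :=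
  ⟨fun x y hx hy => h.1 x y (hx.trans hkm) (hy.trans_le hkm),
    fun x y hx hy => h.2 x y (hx.trans_le hkm) (hy.trans hkm)⟩

lemma Ultrafilter.exists_forall_eventually_eq {ι α T : Type*} [Finite T] (u : Ultrafilter ι)
    (g : ι → α → T) : ∃ t : α → T, ∀ a, ∀ᶠ i in u, g i a = t a := by
  choose t ht using fun a => (u.map (g · a)).eq_pure_of_finite
  refine ⟨t, fun a => (Ultrafilter.mem_map (s := {x | x = t a})).mp ?_⟩
  rw [ht a]
  exact Ultrafilter.mem_pure.mpr rfl

/-- A limit, along a free ultrafilter, of the squares of side `2n` recentred at the origin. -/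
lemma exists_validZ2_of_forall_validSquare {T C : Type*} [Finite T] {N S E W : T → C}
    (h : ∀ k, ∃ t, ValidSquare N S E W k t) : ∃ t, ValidZ2 N S E W t := by
  choose sq hsq using h
  obtain ⟨t, ht⟩ := (Filter.hyperfilter ℕ).exists_forall_eventually_eq
    fun n (p : ℤ × ℤ) => sq (2 * n) (p.1 + n).toNat (p.2 + n).toNat
  refine ⟨t, fun x y => ?_⟩
  have hlarge : ∀ᶠ n in Filter.hyperfilter ℕ, x.natAbs + y.natAbs < n :=
    Filter.Eventually.filter_mono (Nat.cofinite_eq_atTop ▸ Filter.hyperfilter_le_cofinite)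
      (Filter.eventually_gt_atTop _)
  obtain ⟨n, hn, h0, hN, hE⟩ :=
    (hlarge.and ((ht (x, y)).and ((ht (x, y + 1)).and (ht (x + 1, y))))).exists
  rw [← h0, ← hN, ← hE]
  constructor
  · rw [show (y + 1 + n).toNat = (y + n).toNat + 1 by omega]
    exact (hsq (2 * n)).1 _ _ (by omega) (by omega)
  · rw [show (x + 1 + n).toNat = (x + n).toNat + 1 by omega]
    exact (hsq (2 * n)).2 _ _ (by omega) (by omega)

/-- for the extended automaton `𝒜'_T` of a finite
NW-deterministic tile set, there is a positive integer `n` with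
`σ_⊥^n = σ_c` (as maps on `Σ^ω`) if and only if `ℤ²` has no valid
Wang tiling by `T`. -/
theorem stmt_14 {T C : Type*} [Fintype T] (N S E W : T → C)
    (hNW : NWDet N S E W) :
    (∃ n : ℕ, 0 < n ∧
        ((tileM' N S E W).outInf (Sum.inl none))^[n] =
          (tileM' N S E W).outInf (Sum.inr ())) ↔
      ¬∃ t : ℤ × ℤ → T, ValidZ2 N S E W t := by
  constructor
  · rintro ⟨n, -, hn⟩ ⟨f, hf⟩
    have hdiag := iterate_outInf_bot_diagonal N S E W hNW hf n 0
    simp [hn, tileM'_outInf_inr] at hdiag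
  · intro hno
    obtain ⟨k, hk⟩ : ∃ k, ¬∃ t, ValidSquare N S E W k t := by
      by_contra! hall
      exact hno (exists_validZ2_of_forall_validSquare hall)
    refine ⟨2 * (k + 1), by omega, funext fun w => ?_⟩
    rw [tileM'_outInf_inr]
    funext p
    by_contra hp
    obtain ⟨r, hr⟩ := Option.ne_none_iff_exists'.mp hp
    obtain ⟨t, ht⟩ := exists_validSquare_of_iterate_outInf_bot_eq_some N S E W hr
    exact hk ⟨t, ht.mono k.le_succ⟩
end
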